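/- Let ρ : ℝ → (d×d complex matrices) be a family of density matrices, differentiable at t, with ρ(0) = ρ₀. Let f(t) = Tr(ρ₀·ρ(t)) (a real number), assume 0 < f(t) < 1, and define the Bures angle L(t) = arccos(√f(t)). Then L is differentiable at t and sin(2·L(t))·L'(t) = −f'(t) = −Tr(ρ₀·ρ'(t)) ≥ S(ρ₀) − ln Tr(exp(ρ'(t))), where exp is the matrix exponential and ρ'(t) is the (Hermitian, traceless) derivative of ρ at t, so that Tr exp(ρ'(t)) is a positive real number. -/

import Mathlib

/-!
The derivative statements are the chain rule for `arccos ∘ √` together with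
`sin (2 arccos √x) = 2 √x √(1 - x)`, after differentiating the identities `ρ(u)ᴴ = ρ(u)` and
`Tr ρ(u) = 1` entrywise.

The entropy bound is the Gibbs variational principle `S(ρ) + Tr(ρ H) ≤ log Tr exp H` for
`H = ρ'`. Write `ρ = V diag(p) Vᴴ` and `B = Vᴴ H V`, so that `Tr(ρ H) = ∑ pᵢ Bᵢᵢ`. The classical
Gibbs inequality gives `-∑ pᵢ log pᵢ + ∑ pᵢ Bᵢᵢ ≤ log ∑ exp Bᵢᵢ`, and Peierls' inequality
`∑ exp Bᵢᵢ ≤ Tr exp B = Tr exp H` is Jensen's inequality for `exp`: diagonalising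
`B = U diag(q) Uᴴ`, the diagonal of `B` is the image of `q` under the doubly stochastic
matrix `(|Uᵢⱼ|²)`.
-/

open Matrix Complex
open scoped ComplexOrder

lemma ConvexOn.sum_le_sum_of_mem_doublyStochastic {n : Type*} [Fintype n] [DecidableEq n]
    {s : Set ℝ} {φ : ℝ → ℝ} (hφ : ConvexOn ℝ s φ) {M : Matrix n n ℝ}
    (hM : M ∈ doublyStochastic ℝ n) {q : n → ℝ} (hq : ∀ j, q j ∈ s) :
    ∑ i, φ ((M *ᵥ q) i) ≤ ∑ j, φ (q j) :=
  calc ∑ i, φ ((M *ᵥ q) i)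
      ≤ ∑ i, ∑ j, M i j * φ (q j) := Finset.sum_le_sum fun i _ =>
        hφ.map_sum_le (fun j _ => nonneg_of_mem_doublyStochastic hM)
          (sum_row_of_mem_doublyStochastic hM i) (fun j _ => hq j)
    _ = ∑ j, φ (q j) := by
        rw [Finset.sum_comm]
        simp_rw [← Finset.sum_mul, sum_col_of_mem_doublyStochastic hM, one_mul]

lemma neg_sum_mul_log_add_sum_mul_le_log_sum_exp {ι : Type*} [Fintype ι] {p : ι → ℝ}
    (hp0 : ∀ i, 0 ≤ p i) (hp1 : ∑ i, p i = 1) (h : ι → ℝ) :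
    -(∑ i, p i * Real.log (p i)) + ∑ i, p i * h i ≤ Real.log (∑ i, Real.exp (h i)) := by
  set Z := ∑ i, Real.exp (h i)
  have hne : (Finset.univ : Finset ι).Nonempty :=
    Finset.nonempty_of_sum_ne_zero (hp1 ▸ one_ne_zero)
  have hZ : 0 < Z := Finset.sum_pos (fun i _ => Real.exp_pos _) hne
  have hpointwise : ∀ i,
      p i * h i - p i * Real.log (p i) ≤ Real.exp (h i) / Z - p i + p i * Real.log Z
  · intro i
    rcases (hp0 i).eq_or_lt with hpi | hpi
    · rw [← hpi]
      simp only [zero_mul, Real.log_zero, mul_zero, sub_self, sub_zero, add_zero]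
      positivity
    · -- `x + 1 ≤ exp x` at `x = h - log Z - log p`, multiplied by `p`
      have hx := Real.add_one_le_exp (h i - Real.log Z - Real.log (p i))
      rw [Real.exp_sub, Real.exp_sub, Real.exp_log hZ, Real.exp_log hpi] at hx
      have := mul_le_mul_of_nonneg_left hx hpi.le
      rw [mul_div_cancel₀ _ hpi.ne'] at this
      linarith
  have hsum := Finset.sum_le_sum fun i (_ : i ∈ Finset.univ) => hpointwise i
  simp only [Finset.sum_add_distrib, Finset.sum_sub_distrib, ← Finset.sum_mul, ← Finset.sum_div,
    hp1] at hsum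
  have hZ1 : (∑ i, Real.exp (h i)) / Z = 1 := div_self hZ.ne'
  linarith

namespace Matrix

variable {n : Type*} [Fintype n] [DecidableEq n]

lemma of_normSq_mem_doublyStochastic {U : Matrix n n ℂ} (hU : U ∈ unitaryGroup n ℂ) :
    of (fun i j => normSq (U i j)) ∈ doublyStochastic ℝ n := by
  refine mem_doublyStochastic_iff_sum.2 ⟨fun i j => normSq_nonneg _, fun i => ?_, fun j => ?_⟩
  · have h := congr_fun₂ (mem_unitaryGroup_iff.1 hU) i i
    simp only [mul_apply, star_apply, RCLike.star_def, mul_conj, one_apply_eq] at h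
    exact_mod_cast h
  · have h := congr_fun₂ (mem_unitaryGroup_iff'.1 hU) j j
    simp only [mul_apply, star_apply, RCLike.star_def, mul_comm (starRingEnd ℂ _), mul_conj,
      one_apply_eq] at h
    exact_mod_cast h

namespace IsHermitian

variable {A : Matrix n n ℂ} (hA : A.IsHermitian)
include hA

lemma apply_self_eq_sum_normSq_mul_eigenvalues (i : n) :
    A i i = ∑ j, (normSq (hA.eigenvectorUnitary i j) * hA.eigenvalues j : ℝ) := by
  conv_lhs => rw [hA.spectral_theorem]
  rw [Unitary.conjStarAlgAut_apply, mul_apply]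
  push_cast
  refine Finset.sum_congr rfl fun j _ => ?_
  rw [mul_diagonal, star_apply, RCLike.star_def, ← mul_conj]
  simp only [eigenvectorUnitary_apply, coe_algebraMap, Function.comp_apply]
  ring

lemma trace_exp :
    (NormedSpace.exp A).trace = ∑ j, (Real.exp (hA.eigenvalues j) : ℂ) := by
  set U : Matrix n n ℂ := (hA.eigenvectorUnitary : Matrix n n ℂ)
  have hinv : U⁻¹ = star U :=
    inv_eq_left_inv (UnitaryGroup.star_mul_self _)
  have hUnit : IsUnit U := Unitary.isUnit_coe
  conv_lhs => rw [hA.spectral_theorem, Unitary.conjStarAlgAut_apply, ← hinv]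
  rw [exp_conj U _ hUnit, trace_mul_cycle, hinv, UnitaryGroup.star_mul_self, one_mul,
    exp_diagonal, trace_diagonal]
  congr 1; funext j
  simp [← Complex.exp_eq_exp_ℂ, ← Complex.ofReal_exp]

lemma sum_exp_re_diag_le_re_trace_exp :
    ∑ i, Real.exp (A i i).re ≤ ((NormedSpace.exp A).trace).re := by
  have hdiag : ∀ i, (A i i).re =
      (of (fun i j => normSq (hA.eigenvectorUnitary i j)) *ᵥ hA.eigenvalues) i := fun i => by
    rw [hA.apply_self_eq_sum_normSq_mul_eigenvalues, ofReal_re]; rfl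
  rw [hA.trace_exp, ← ofReal_sum, ofReal_re]
  simp only [hdiag]
  exact convexOn_exp.sum_le_sum_of_mem_doublyStochastic
    (of_normSq_mem_doublyStochastic hA.eigenvectorUnitary.2) fun _ => Set.mem_univ _

lemma re_trace_exp_pos [Nonempty n] : 0 < ((NormedSpace.exp A).trace).re := by
  rw [hA.trace_exp, ← ofReal_sum, ofReal_re]
  exact Finset.sum_pos (fun j _ => Real.exp_pos _) Finset.univ_nonempty

end IsHermitian

lemma trace_exp_inv_mul_mul {𝔸 : Type*} [NormedCommRing 𝔸] [NormedAlgebra ℚ 𝔸] [CompleteSpace 𝔸]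
    {V : Matrix n n 𝔸} (hV : IsUnit V) (A : Matrix n n 𝔸) :
    (NormedSpace.exp (V⁻¹ * A * V)).trace = (NormedSpace.exp A).trace := by
  rw [exp_conj' V A hV, trace_mul_cycle, mul_nonsing_inv V ((isUnit_iff_isUnit_det V).1 hV),
    one_mul]

end Matrix

namespace Matrix.PosSemidef

variable {n : Type*} [Fintype n] [DecidableEq n]

lemma entropy_add_re_trace_mul_le_log_re_trace_exp {ρ H : Matrix n n ℂ} (hρ : ρ.PosSemidef)
    (hρ1 : ρ.trace = 1) (hH : H.IsHermitian) :
    -(∑ i, hρ.1.eigenvalues i * Real.log (hρ.1.eigenvalues i)) + ((ρ * H).trace).re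
      ≤ Real.log ((NormedSpace.exp H).trace).re := by
  set p := hρ.1.eigenvalues
  set V : Matrix n n ℂ := (hρ.1.eigenvectorUnitary : Matrix n n ℂ)
  have hVinv : V⁻¹ = Vᴴ := inv_eq_left_inv (UnitaryGroup.star_mul_self _)
  have hVunit : IsUnit V := Unitary.isUnit_coe
  set B := Vᴴ * H * V
  have hB : B.IsHermitian := isHermitian_conjTranspose_mul_mul V hH
  have hp1 : ∑ i, p i = 1 := by
    have := hρ.1.trace_eq_sum_eigenvalues
    rw [hρ1] at this
    exact_mod_cast congrArg re this.symm
  have htrace : ((ρ * H).trace).re = ∑ i, p i * (B i i).re := by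
    have hcyc : (ρ * H).trace = (diagonal (RCLike.ofReal ∘ p) * B).trace := by
      conv_lhs => rw [hρ.1.spectral_theorem, Unitary.conjStarAlgAut_apply]
      rw [mul_assoc, mul_assoc, trace_mul_comm]
      simp only [B, Matrix.mul_assoc]
      rfl
    rw [hcyc]
    simp [trace, diagonal_mul]
  calc -(∑ i, p i * Real.log (p i)) + ((ρ * H).trace).re
      ≤ Real.log (∑ i, Real.exp (B i i).re) := by
        rw [htrace]
        exact neg_sum_mul_log_add_sum_mul_le_log_sum_exp hρ.eigenvalues_nonneg hp1 _
    _ ≤ Real.log ((NormedSpace.exp B).trace).re := by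
        have hne : (Finset.univ : Finset n).Nonempty :=
          Finset.nonempty_of_sum_ne_zero (hp1 ▸ one_ne_zero)
        exact Real.log_le_log (Finset.sum_pos (fun i _ => Real.exp_pos _) hne)
          hB.sum_exp_re_diag_le_re_trace_exp
    _ = Real.log ((NormedSpace.exp H).trace).re := by
        rw [show B = V⁻¹ * H * V by rw [hVinv], trace_exp_inv_mul_mul hVunit]

end Matrix.PosSemidef

namespace Matrix

variable {n 𝕜 : Type*} [RCLike 𝕜] {A : ℝ → Matrix n n 𝕜} {A' : Matrix n n 𝕜} {t : ℝ}

lemma isHermitian_of_hasDerivAt_apply (hA : ∀ i j, HasDerivAt (fun u => A u i j) (A' i j) t)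
    (hherm : ∀ u, (A u).IsHermitian) : A'.IsHermitian := by
  ext i j
  have hsym : (fun u => star (A u j i)) = fun u => A u i j :=
    funext fun u => congr_fun₂ (hherm u) i j
  have hstar : HasDerivAt (fun u => A u i j) (star (A' j i)) t := hsym ▸ (hA j i).star
  exact ((hA i j).unique hstar).symm

lemma hasDerivAt_trace [Fintype n] (hA : ∀ i j, HasDerivAt (fun u => A u i j) (A' i j) t) :
    HasDerivAt (fun u => (A u).trace) A'.trace t :=
  HasDerivAt.fun_sum fun i _ => hA i i

lemma hasDerivAt_mul_apply [Fintype n] (hA : ∀ i j, HasDerivAt (fun u => A u i j) (A' i j) t)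
    (B : Matrix n n 𝕜) (i j : n) :
    HasDerivAt (fun u => (B * A u) i j) ((B * A') i j) t :=
  HasDerivAt.fun_sum fun k _ => (hA k j).const_mul (B i k)

lemma trace_eq_zero_of_hasDerivAt_apply [Fintype n]
    (hA : ∀ i j, HasDerivAt (fun u => A u i j) (A' i j) t) {c : 𝕜}
    (htr : ∀ u, (A u).trace = c) : A'.trace = 0 := by
  have h := hasDerivAt_trace hA
  simp only [htr] at h
  exact h.unique (hasDerivAt_const t c)

end Matrix

namespace Real

lemma sin_two_mul_arccos_sqrt {x : ℝ} (h0 : 0 ≤ x) (h1 : x ≤ 1) :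
    sin (2 * arccos √x) = 2 * √x * √(1 - x) := by
  rw [sin_two_mul, sin_arccos, cos_arccos (by linarith [sqrt_nonneg x]) (sqrt_le_one.2 h1),
    sq_sqrt h0]
  ring

lemma hasDerivAt_arccos_sqrt {g : ℝ → ℝ} {g' t : ℝ} (hg : HasDerivAt g g' t) (h0 : 0 < g t)
    (h1 : g t < 1) :
    HasDerivAt (fun u => arccos √(g u)) (-g' / (2 * √(g t) * √(1 - g t))) t := by
  have hne : √(g t) ≠ 1 := by simpa using h1.ne
  refine ((hasDerivAt_arccos (by linarith [sqrt_nonneg (g t)]) hne).comp t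
    (hg.sqrt h0.ne')).congr_deriv ?_
  rw [sq_sqrt h0.le]
  have : 0 < √(g t) := sqrt_pos.2 h0
  have : 0 < √(1 - g t) := sqrt_pos.2 (by linarith)
  field_simp

end Real

theorem stmt9 {d : ℕ} (ρfam : ℝ → Matrix (Fin d) (Fin d) ℂ)
    (ρ₀ ρ' : Matrix (Fin d) (Fin d) ℂ)
    (hdens : ∀ u : ℝ, (ρfam u).PosSemidef ∧ (ρfam u).trace = 1)
    (hρ₀ : ρ₀.PosSemidef) (h0 : ρfam 0 = ρ₀)
    (t : ℝ)
    (hderiv : ∀ i j : Fin d, HasDerivAt (fun u => ρfam u i j) (ρ' i j) t)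
    (f : ℝ → ℝ) (hf : f = fun u => ((ρ₀ * ρfam u).trace).re)
    (hf0 : 0 < f t) (hf1 : f t < 1)
    (L : ℝ → ℝ) (hL : L = fun u => Real.arccos (Real.sqrt (f u))) :
    ρ'.IsHermitian ∧ ρ'.trace = 0 ∧ 0 < ((NormedSpace.exp ρ').trace).re ∧
    HasDerivAt f (((ρ₀ * ρ').trace).re) t ∧
    ∃ L' : ℝ, HasDerivAt L L' t ∧
      Real.sin (2 * L t) * L' = -(((ρ₀ * ρ').trace).re) ∧
      (-(∑ i, (hρ₀.1.eigenvalues i) * Real.log (hρ₀.1.eigenvalues i)))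
          - Real.log (((NormedSpace.exp ρ').trace).re)
        ≤ -(((ρ₀ * ρ').trace).re) := by
  have hherm : ρ'.IsHermitian := isHermitian_of_hasDerivAt_apply hderiv fun u => (hdens u).1.1
  have hρ₀1 : ρ₀.trace = 1 := h0 ▸ (hdens 0).2
  have : Nonempty (Fin d) := by
    refine Fin.pos_iff_nonempty.1 (Nat.pos_of_ne_zero fun hd => ?_)
    subst hd
    simp at hρ₀1
  have hfd : HasDerivAt f ((ρ₀ * ρ').trace).re t := by
    subst hf
    exact reCLM.hasFDerivAt.comp_hasDerivAt t (hasDerivAt_trace (hasDerivAt_mul_apply hderiv ρ₀))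
  have hLd := Real.hasDerivAt_arccos_sqrt hfd hf0 hf1
  rw [← hL] at hLd
  refine ⟨hherm, trace_eq_zero_of_hasDerivAt_apply hderiv fun u => (hdens u).2,
    hherm.re_trace_exp_pos, hfd, _, hLd, ?_, ?_⟩
  · have : 0 < √(f t) := Real.sqrt_pos.2 hf0
    have : 0 < √(1 - f t) := Real.sqrt_pos.2 (by linarith)
    rw [hL, Real.sin_two_mul_arccos_sqrt hf0.le hf1.le]
    field_simp
  · linarith [hρ₀.entropy_add_re_trace_mul_le_log_re_trace_exp hρ₀1 hherm]
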